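/- FQSym^(ℓ), equipped with the coproduct Δf(𝐀) := f(𝐀'⊕𝐀'') given by the ordinal sum of two mutually commuting copies of the colored alphabet, is a graded connected bialgebra, hence a Hopf algebra. Explicitly, Δ G_{σ,u} = Σ G_{σ',u'} ⊗ G_{σ'',u''}, the sum being over all pairs of colored permutations (σ',u'), (σ'',u'') such that (σ,u) belongs to the shifted shuffle (σ',u') ⋒ (σ'',u''). -/

import Mathlib

open scoped BigOperators

abbrev Series (α : Type) (ℓ : ℕ) : Type := List (α × Fin ℓ) → ℤ

def ncMul {α : Type} {ℓ : ℕ} (F G : Series α ℓ) : Series α ℓ :=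
  fun w => ∑ k ∈ Finset.range (w.length + 1), F (w.take k) * G (w.drop k)

def stdList {α : Type} [LinearOrder α] (v : List α) : List ℕ :=
  v.mapIdx fun i a =>
    ((List.range v.length).filter fun j =>
      v.getD j a < a ∨ (v.getD j a = a ∧ j < i)).length

def permList {n : ℕ} (σ : Equiv.Perm (Fin n)) : List ℕ :=
  (List.finRange n).map fun i => (σ i : ℕ)

def colorList {n ℓ : ℕ} (u : Fin n → Fin ℓ) : List (Fin ℓ) :=
  (List.finRange n).map u

def Gfun {α : Type} [LinearOrder α] {ℓ n : ℕ} (σ : Equiv.Perm (Fin n))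
    (u : Fin n → Fin ℓ) : Series α ℓ :=
  fun w =>
    if stdList (w.map Prod.fst) = permList σ ∧ w.map Prod.snd = colorList u
    then 1 else 0

/-- The list of all shuffles of two words. -/
def shuffleList {α : Type} : List α → List α → List (List α)
  | [], v => [v]
  | a :: u, [] => [a :: u]
  | a :: u, b :: v =>
      ((shuffleList u (b :: v)).map (a :: ·)) ++ ((shuffleList (a :: u) v).map (b :: ·))
  termination_by u v => u.length + v.length

/-- The colored word of a colored permutation `(σ, u)`. -/
def cpWord {n ℓ : ℕ} (σ : Equiv.Perm (Fin n)) (u : Fin n → Fin ℓ) :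
    List (ℕ × Fin ℓ) :=
  (List.finRange n).map fun i => ((σ i : ℕ), u i)

/-- Shift the alphabet letters of a colored word by `k` (colors follow their letters). -/
def shiftW {ℓ : ℕ} (k : ℕ) (w : List (ℕ × Fin ℓ)) : List (ℕ × Fin ℓ) :=
  w.map fun p => (p.1 + k, p.2)

/-- Embedding of the colored alphabet into the first summand of the ordinal sum `𝐀'⊕𝐀''`. -/
def embL {ℓ : ℕ} (p : ℕ × Fin ℓ) : (ℕ ⊕ₗ ℕ) × Fin ℓ := (toLex (Sum.inl p.1), p.2)

/-- Embedding of the colored alphabet into the second summand of the ordinal sum `𝐀'⊕𝐀''`. -/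
def embR {ℓ : ℕ} (p : ℕ × Fin ℓ) : (ℕ ⊕ₗ ℕ) × Fin ℓ := (toLex (Sum.inr p.1), p.2)

/-!
Write `Std w` for the colored standardization of a word, so that `G_{σ,u}(w) = [Std w = (σ,u)]`.

Product: standardizing a prefix or a suffix of `w` only depends on `Std w`, so
`G_{σ',u'}(w_{≤k}) G_{σ'',u''}(w_{>k})` selects the single `τ = Std w` whose prefix and suffix
standardize to `σ'` and `σ''`.

Coproduct: every letter of `𝐀'` is smaller than every letter of `𝐀''`, so if `s` interleaves
`w'` (in `𝐀'`) and `w''` (in `𝐀''`), then `Std s` is the same interleaving of `Std w'` and of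
`Std w''` shifted by `|w'|`. Shuffling the zipped words carries both through the same
interleaving, and turns the sum over interleavings into a sum over the shifted shuffle of
`Std w'` and `Std w''`, a list without repetitions because its two factors use disjoint letters.
-/

open Finset

lemma zip_eq_zip_iff_of_length_eq {α β : Type*} {l₁ l₃ : List α} {l₂ l₄ : List β}
    (h₁ : l₁.length = l₂.length) (h₂ : l₃.length = l₄.length) :
    l₁.zip l₂ = l₃.zip l₄ ↔ l₁ = l₃ ∧ l₂ = l₄ := by
  refine ⟨fun h => ⟨?_, ?_⟩, by rintro ⟨rfl, rfl⟩; rfl⟩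
  · simpa [List.map_fst_zip, h₁.le, h₂.le] using congrArg (List.map Prod.fst) h
  · simpa [List.map_snd_zip, h₁.ge, h₂.ge] using congrArg (List.map Prod.snd) h

lemma card_filter_lt_lt_card_filter_lt_iff {ι β : Type*} [LinearOrder β] {s : Finset ι}
    {f : ι → β} (hf : Set.InjOn f s) {i j : ι} (hi : i ∈ s) (hj : j ∈ s) :
    #{k ∈ s | f k < f j} < #{k ∈ s | f k < f i} ↔ f j < f i := by
  have key : ∀ {a b}, a ∈ s → f a < f b → #{k ∈ s | f k < f a} < #{k ∈ s | f k < f b} :=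
    fun {a b} ha hab => card_lt_card <| (ssubset_iff_of_subset fun k hk => by
      simp only [mem_filter] at hk ⊢; exact ⟨hk.1, hk.2.trans hab⟩).2
      ⟨a, by simp [ha, hab], by simp⟩
  refine ⟨fun h => ?_, key hj⟩
  rcases lt_trichotomy (f j) (f i) with hji | hji | hji
  · exact hji
  · rw [hf hj hi hji] at h; exact absurd h (lt_irrefl _)
  · exact absurd (key hi hji) h.not_gt

lemma card_filter_getD_lt_of_perm_range {t : List ℕ} {n c : ℕ} (ht : t.Perm (List.range n))
    (hc : c ≤ n) : #{j ∈ range n | t.getD j 0 < c} = c := by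
  have hlen : t.length = n := by simpa using ht.length_eq
  have hmap : (List.range n).map (t.getD · 0) = t :=
    List.ext_getElem (by simp [hlen]) fun i h₁ h₂ => by simp [List.getElem?_eq_getElem h₂]
  rw [← Nat.count_eq_card_filter_range, Nat.count]
  change List.countP ((fun x => decide (x < c)) ∘ (t.getD · 0)) _ = c
  rw [← List.countP_map, hmap, ht.countP_eq, ← Nat.count, Nat.count_eq_card_filter_range,
    range_eq_Ico, Ico_filter_lt, Nat.card_Ico]
  omega

section Standardization
variable {α : Type} [LinearOrder α]

-- `stdList` ranks positions by letter, then by position; `WithBot` makes the key total in `j`.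
def stdKey (v : List α) (j : ℕ) : WithBot α ×ₗ ℕ := toLex (v[j]?, j)

lemma stdKey_lt_stdKey_iff {v : List α} {i j : ℕ} (hi : i < v.length) (hj : j < v.length) :
    stdKey v j < stdKey v i ↔ v[j] < v[i] ∨ v[j] = v[i] ∧ j < i := by
  simp [stdKey, Prod.Lex.toLex_lt_toLex, List.getElem?_eq_getElem hi, List.getElem?_eq_getElem hj,
    WithBot.some_eq_coe]

lemma stdKey_take_lt_stdKey_take_iff {v : List α} {k i j : ℕ} (hi : i < k) (hj : j < k) :
    stdKey (v.take k) j < stdKey (v.take k) i ↔ stdKey v j < stdKey v i := by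
  simp [stdKey, hi, hj]

lemma stdKey_drop_lt_stdKey_drop_iff {v : List α} {k i j : ℕ} :
    stdKey (v.drop k) j < stdKey (v.drop k) i ↔ stdKey v (k + j) < stdKey v (k + i) := by
  simp [stdKey, Prod.Lex.toLex_lt_toLex, List.getElem?_drop]

@[simp] lemma length_stdList (v : List α) : (stdList v).length = v.length := by
  simp [stdList]

lemma getElem_stdList (v : List α) (i : ℕ) (hi : i < (stdList v).length) :
    (stdList v)[i] = #{j ∈ range v.length | stdKey v j < stdKey v i} := by
  simp only [stdList, List.getElem_mapIdx]
  rw [← List.countP_eq_length_filter, ← Nat.count, Nat.count_eq_card_filter_range]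
  refine congrArg card (filter_congr fun j hj => ?_)
  have hi' : i < v.length := by simpa using hi
  rw [stdKey_lt_stdKey_iff hi' (mem_range.1 hj), List.getD_eq_getElem _ _ (mem_range.1 hj)]

lemma getElem_stdList_lt_getElem_stdList_iff (v : List α) {i j : ℕ}
    (hi : i < (stdList v).length) (hj : j < (stdList v).length) :
    (stdList v)[j] < (stdList v)[i] ↔ stdKey v j < stdKey v i := by
  rw [getElem_stdList, getElem_stdList]
  exact card_filter_lt_lt_card_filter_lt_iff
    (fun a _ b _ h => congrArg Prod.snd (toLex.injective h)) (by simpa using hi) (by simpa using hj)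

lemma nodup_stdList (v : List α) : (stdList v).Nodup := by
  refine List.nodup_iff_injective_get.2 fun i j h => ?_
  simp only [List.get_eq_getElem] at h
  have hij := (getElem_stdList_lt_getElem_stdList_iff v j.2 i.2).not.1 h.not_lt
  have hji := (getElem_stdList_lt_getElem_stdList_iff v i.2 j.2).not.1 h.not_gt
  exact Fin.ext (congrArg Prod.snd (toLex.injective ((not_lt.1 hji).antisymm (not_lt.1 hij))))

lemma stdList_perm_range (v : List α) : (stdList v).Perm (List.range v.length) := by
  refine List.Subperm.perm_of_length_le
    (List.subperm_of_subset (nodup_stdList v) fun x hx => ?_) (by simp)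
  obtain ⟨i, hi, rfl⟩ := List.getElem_of_mem hx
  rw [getElem_stdList, List.mem_range]
  refine (card_lt_card ((ssubset_iff_of_subset (filter_subset _ _)).2 ⟨i, ?_, by simp⟩)).trans_le
    (card_range _).le
  simpa using hi

lemma lt_length_of_mem_stdList {v : List α} {x : ℕ} (hx : x ∈ stdList v) : x < v.length :=
  List.mem_range.1 ((stdList_perm_range v).mem_iff.1 hx)

lemma stdList_eq_of_perm_range {v : List α} {t : List ℕ} (ht : t.Perm (List.range v.length))
    (hvt : ∀ i j, i < v.length → j < v.length →
      (t.getD j 0 < t.getD i 0 ↔ stdKey v j < stdKey v i)) :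
    stdList v = t := by
  have hlen : t.length = v.length := by simpa using ht.length_eq
  refine List.ext_getElem (by simp [hlen]) fun i hi hi' => ?_
  have hiv : i < v.length := by simpa using hi
  have hti : t.getD i 0 = t[i] := by simp [List.getElem?_eq_getElem hi']
  have hcount := card_filter_getD_lt_of_perm_range ht
    (List.mem_range.1 (ht.mem_iff.1 (List.getElem_mem hi'))).le
  rw [getElem_stdList, ← hcount, ← hti]
  exact congrArg card (filter_congr fun j hj => (hvt i j hiv (mem_range.1 hj)).symm)

lemma stdKey_stdList_lt_stdKey_stdList_iff (v : List α) {i j : ℕ} (hi : i < v.length)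
    (hj : j < v.length) :
    stdKey (stdList v) j < stdKey (stdList v) i ↔ stdKey v j < stdKey v i := by
  rw [stdKey_lt_stdKey_iff (by simpa) (by simpa), ← getElem_stdList_lt_getElem_stdList_iff,
    or_iff_left]
  rintro ⟨h, hji⟩
  have := (nodup_stdList v).getElem_inj_iff.1 h
  omega

lemma stdList_congr {β : Type} [LinearOrder β] {v : List α} {w : List β}
    (hlen : v.length = w.length)
    (hvw : ∀ i j, i < v.length → j < v.length →
      (stdKey w j < stdKey w i ↔ stdKey v j < stdKey v i)) :
    stdList v = stdList w := by
  refine stdList_eq_of_perm_range (hlen ▸ stdList_perm_range w) fun i j hi hj => ?_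
  rw [List.getD_eq_getElem _ _ (by simpa [← hlen]), List.getD_eq_getElem _ _ (by simpa [← hlen]),
    getElem_stdList_lt_getElem_stdList_iff, hvw i j hi hj]

lemma stdList_take (v : List α) (k : ℕ) : stdList (v.take k) = stdList ((stdList v).take k) := by
  refine (stdList_congr (by simp) fun i j hi hj => ?_).symm
  simp only [List.length_take, length_stdList, lt_min_iff] at hi hj
  rw [stdKey_take_lt_stdKey_take_iff hi.1 hj.1, stdKey_take_lt_stdKey_take_iff hi.1 hj.1,
    stdKey_stdList_lt_stdKey_stdList_iff v hi.2 hj.2]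

lemma stdList_drop (v : List α) (k : ℕ) : stdList (v.drop k) = stdList ((stdList v).drop k) := by
  refine (stdList_congr (by simp) fun i j hi hj => ?_).symm
  simp only [List.length_drop, length_stdList] at hi hj
  rw [stdKey_drop_lt_stdKey_drop_iff, stdKey_drop_lt_stdKey_drop_iff,
    stdKey_stdList_lt_stdKey_stdList_iff v (by omega) (by omega)]

lemma pairwise_zip_stdList (v : List α) :
    (v.zip (stdList v)).Pairwise fun x y => x.1 ≤ y.1 ↔ x.2 < y.2 := by
  refine List.pairwise_iff_getElem.2 fun i j hi hj hij => ?_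
  simp only [List.length_zip, length_stdList, min_self] at hi hj
  simp only [List.getElem_zip]
  rw [getElem_stdList_lt_getElem_stdList_iff, stdKey_lt_stdKey_iff hj hi]
  simp [hij, le_iff_lt_or_eq]

-- For `x` before `y`, the label grows iff the letter does not decrease: ties go left to right.
lemma stdList_eq_of_pairwise {P : List (α × ℕ)}
    (hperm : (P.map Prod.snd).Perm (List.range P.length))
    (hP : P.Pairwise fun x y => x.1 ≤ y.1 ↔ x.2 < y.2) :
    stdList (P.map Prod.fst) = P.map Prod.snd := by
  refine stdList_eq_of_perm_range (by simpa using hperm) fun i j hi hj => ?_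
  simp only [List.length_map] at hi hj
  rw [List.getD_eq_getElem _ _ (by simpa), List.getD_eq_getElem _ _ (by simpa),
    stdKey_lt_stdKey_iff (by simpa) (by simpa)]
  simp only [List.getElem_map]
  rcases lt_trichotomy i j with hij | rfl | hij
  · have h := List.pairwise_iff_getElem.1 hP i j hi hj hij
    have hne : P[j].2 ≠ P[i].2 := fun h' => hij.ne' <|
      (hperm.nodup_iff.2 List.nodup_range).getElem_inj_iff (hi := by simpa) (hj := by simpa) |>.1
        (by simpa using h')
    rw [← not_iff_not, not_lt, le_iff_lt_or_eq, or_iff_left hne.symm, ← h]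
    simp [hij.not_gt]
  · simp
  · have h := List.pairwise_iff_getElem.1 hP j i hj hi hij
    rw [h.symm]
    simp [le_iff_lt_or_eq, hij, eq_comm]

end Standardization

section Shuffle
variable {α β : Type}

lemma perm_of_mem_shuffleList {u v s : List α} (hs : s ∈ shuffleList u v) :
    s.Perm (u ++ v) := by
  induction u, v using shuffleList.induct generalizing s with
  | case1 v => simp_all [shuffleList]
  | case2 a u => simp_all [shuffleList]
  | case3 a u b v ih₁ ih₂ =>
    simp only [shuffleList, List.mem_append, List.mem_map] at hs
    rcases hs with ⟨t, ht, rfl⟩ | ⟨t, ht, rfl⟩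
    · exact (ih₁ ht).cons a
    · exact ((ih₂ ht).cons b).trans List.perm_middle.symm

lemma length_of_mem_shuffleList {u v s : List α} (hs : s ∈ shuffleList u v) :
    s.length = u.length + v.length := by
  simpa using (perm_of_mem_shuffleList hs).length_eq

lemma shuffleList_map (f : α → β) (u v : List α) :
    shuffleList (u.map f) (v.map f) = (shuffleList u v).map (List.map f) := by
  induction u, v using shuffleList.induct with
  | case1 v => simp [shuffleList]
  | case2 a u => simp [shuffleList]
  | case3 a u b v ih₁ ih₂ =>
    simp only [List.map_cons, shuffleList] at ih₁ ih₂ ⊢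
    simp [ih₁, ih₂, Function.comp_def]

lemma pairwise_of_mem_shuffleList {R : α → α → Prop} {u v s : List α} (hu : u.Pairwise R)
    (hv : v.Pairwise R) (huv : ∀ x ∈ u, ∀ y ∈ v, R x y ∧ R y x) (hs : s ∈ shuffleList u v) :
    s.Pairwise R := by
  induction u, v using shuffleList.induct generalizing s with
  | case1 v => simp_all [shuffleList]
  | case2 a u => simp_all [shuffleList]
  | case3 a u b v ih₁ ih₂ =>
    simp only [shuffleList, List.mem_append, List.mem_map] at hs
    rcases hs with ⟨t, ht, rfl⟩ | ⟨t, ht, rfl⟩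
    · refine List.Pairwise.cons (fun z hz => ?_) (ih₁ hu.of_cons hv
        (fun x hx y hy => huv x (List.mem_cons_of_mem a hx) y hy) ht)
      rcases List.mem_append.1 ((perm_of_mem_shuffleList ht).mem_iff.1 hz) with hz | hz
      · exact List.rel_of_pairwise_cons hu hz
      · exact (huv a List.mem_cons_self z hz).1
    · refine List.Pairwise.cons (fun z hz => ?_) (ih₂ hu hv.of_cons
        (fun x hx y hy => huv x hx y (List.mem_cons_of_mem b hy)) ht)
      rcases List.mem_append.1 ((perm_of_mem_shuffleList ht).mem_iff.1 hz) with hz | hz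
      · exact (huv z hz b List.mem_cons_self).2
      · exact List.rel_of_pairwise_cons hv hz

lemma nodup_shuffleList {u v : List α} (huv : ∀ x ∈ u, ∀ y ∈ v, x ≠ y) :
    (shuffleList u v).Nodup := by
  induction u, v using shuffleList.induct with
  | case1 v => simp [shuffleList]
  | case2 a u => simp [shuffleList]
  | case3 a u b v ih₁ ih₂ =>
    rw [shuffleList]
    refine List.Nodup.append
      ((ih₁ fun x hx y hy => huv x (List.mem_cons_of_mem a hx) y hy).map (List.cons_injective))
      ((ih₂ fun x hx y hy => huv x hx y (List.mem_cons_of_mem b hy)).map (List.cons_injective))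
      ?_
    simp only [List.disjoint_left, List.mem_map]
    rintro _ ⟨s, -, rfl⟩ ⟨t, -, h⟩
    exact huv a List.mem_cons_self b List.mem_cons_self (List.cons_eq_cons.1 h).1.symm

lemma map_shuffleList_eq_of_zip {f : List α → List β} {u v : List α} {u' v' : List β}
    (hu : u.length = u'.length) (hv : v.length = v'.length)
    (hf : ∀ s ∈ shuffleList (u.zip u') (v.zip v'), f (s.map Prod.fst) = s.map Prod.snd) :
    (shuffleList u v).map f = shuffleList u' v' := by
  conv_lhs => rw [← List.map_fst_zip hu.le, ← List.map_fst_zip hv.le]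
  conv_rhs => rw [← List.map_snd_zip hu.ge, ← List.map_snd_zip hv.ge]
  rw [shuffleList_map, shuffleList_map, List.map_map]
  exact List.map_congr_left hf

end Shuffle

section ColoredPermutations
variable {ℓ n : ℕ}

@[simp] lemma length_permList (σ : Equiv.Perm (Fin n)) : (permList σ).length = n := by
  simp [permList]

@[simp] lemma length_colorList (u : Fin n → Fin ℓ) : (colorList u).length = n := by
  simp [colorList]

@[simp] lemma length_cpWord (σ : Equiv.Perm (Fin n)) (u : Fin n → Fin ℓ) :
    (cpWord σ u).length = n := by
  simp [cpWord]

lemma cpWord_eq_zip (σ : Equiv.Perm (Fin n)) (u : Fin n → Fin ℓ) :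
    cpWord σ u = (permList σ).zip (colorList u) := by
  simp [cpWord, permList, colorList, List.zip_map']

lemma cpWord_inj {σ τ : Equiv.Perm (Fin n)} {u v : Fin n → Fin ℓ} :
    cpWord σ u = cpWord τ v ↔ σ = τ ∧ u = v := by
  simp [cpWord, List.map_inj_left, Equiv.ext_iff, funext_iff, Fin.val_inj, forall_and]

lemma exists_permList_eq {t : List ℕ} (ht : t.Perm (List.range n)) :
    ∃ σ : Equiv.Perm (Fin n), permList σ = t := by
  have hlen : t.length = n := by simpa using ht.length_eq
  have hlt : ∀ i (hi : i < t.length), t[i] < n := fun i hi =>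
    List.mem_range.1 (ht.mem_iff.1 (List.getElem_mem hi))
  let f : Fin n → Fin n := fun i => ⟨t[i.1], hlt _ _⟩
  have hf : Function.Injective f := fun i j h => Fin.ext <|
    (ht.nodup_iff.2 List.nodup_range).getElem_inj_iff.1 (congrArg Fin.val h)
  refine ⟨Equiv.ofBijective f (Finite.injective_iff_bijective.1 hf), ?_⟩
  exact List.ext_getElem (by simp [hlen]) fun i _ _ => by simp [permList, f]

lemma permList_inj {n : ℕ} {σ τ : Equiv.Perm (Fin n)} : permList σ = permList τ ↔ σ = τ := by
  simp [permList, List.map_inj_left, Equiv.ext_iff, Fin.val_inj]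

lemma colorList_append {k m : ℕ} (u' : Fin k → Fin ℓ) (u'' : Fin m → Fin ℓ) :
    colorList (Fin.append u' u'') = colorList u' ++ colorList u'' := by
  simp [colorList, ← List.ofFn_eq_map]

end ColoredPermutations

section ColoredStandardization
variable {α : Type} [LinearOrder α] {ℓ n : ℕ}

def coloredStd (w : List (α × Fin ℓ)) : List (ℕ × Fin ℓ) :=
  (stdList (w.map Prod.fst)).zip (w.map Prod.snd)

@[simp] lemma length_coloredStd (w : List (α × Fin ℓ)) : (coloredStd w).length = w.length := by
  simp [coloredStd]

lemma Gfun_apply (σ : Equiv.Perm (Fin n)) (u : Fin n → Fin ℓ) (w : List (α × Fin ℓ)) :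
    Gfun σ u w = if coloredStd w = cpWord σ u then 1 else 0 := by
  rw [Gfun, coloredStd, cpWord_eq_zip]
  exact if_congr (zip_eq_zip_iff_of_length_eq (by simp) (by simp)).symm rfl rfl

lemma Gfun_eq_zero_of_length_ne {σ : Equiv.Perm (Fin n)} {u : Fin n → Fin ℓ}
    {w : List (α × Fin ℓ)} (hw : w.length ≠ n) : Gfun σ u w = 0 :=
  if_neg fun h => hw (by simpa using congrArg List.length h.2)

lemma exists_cpWord_eq_coloredStd (w : List (α × Fin ℓ)) (hw : w.length = n) :
    ∃ (σ : Equiv.Perm (Fin n)) (u : Fin n → Fin ℓ), cpWord σ u = coloredStd w := by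
  obtain ⟨σ, hσ⟩ := exists_permList_eq (n := n) (t := stdList (w.map Prod.fst))
    (by simpa [hw] using stdList_perm_range (w.map Prod.fst))
  refine ⟨σ, fun i => (w[i.1]'(by omega)).2, ?_⟩
  rw [cpWord_eq_zip, coloredStd, hσ]
  congr 1
  exact List.ext_getElem (by simp [hw]) fun i _ _ => by simp [colorList]

lemma sum_Gfun_mul_cpWord (w : List (α × Fin ℓ)) (f : List (ℕ × Fin ℓ) → ℤ) :
    ∑ σ : Equiv.Perm (Fin n), ∑ u : Fin n → Fin ℓ, Gfun σ u w * f (cpWord σ u) =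
      if w.length = n then f (coloredStd w) else 0 := by
  split_ifs with hw
  · obtain ⟨σ₀, u₀, h₀⟩ := exists_cpWord_eq_coloredStd w hw
    simp only [Gfun_apply, ← h₀, cpWord_inj, ite_mul, one_mul, zero_mul, ite_and]
    simp [Finset.sum_ite_eq]
  · refine Finset.sum_eq_zero fun σ _ => Finset.sum_eq_zero fun u _ => ?_
    rw [Gfun_apply, if_neg fun h => hw (by simpa using congrArg List.length h), zero_mul]

end ColoredStandardization

section Product
variable {α : Type} {ℓ : ℕ}

lemma ncMul_apply_of_length {F G : Series α ℓ} {k : ℕ} (hF : ∀ v, v.length ≠ k → F v = 0)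
    (w : List (α × Fin ℓ)) : ncMul F G w = F (w.take k) * G (w.drop k) := by
  refine sum_eq_single k (fun j hj hjk => ?_) fun hk => ?_
  · rw [hF _ (by rw [List.length_take]; rw [mem_range] at hj; omega), zero_mul]
  · rw [hF _ (by rw [List.length_take]; rw [mem_range] at hk; omega), zero_mul]

lemma ncMul_Gfun_Gfun [LinearOrder α] {k m : ℕ} (σ' : Equiv.Perm (Fin k)) (u' : Fin k → Fin ℓ)
    (σ'' : Equiv.Perm (Fin m)) (u'' : Fin m → Fin ℓ) :
    ncMul (Gfun (α := α) σ' u') (Gfun σ'' u'') =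
      ∑ τ ∈ univ.filter (fun τ : Equiv.Perm (Fin (k + m)) =>
          stdList ((permList τ).take k) = permList σ' ∧
          stdList ((permList τ).drop k) = permList σ''),
        Gfun τ (Fin.append u' u'') := by
  funext w
  rw [Finset.sum_apply, ncMul_apply_of_length fun _ => Gfun_eq_zero_of_length_ne]
  by_cases hw : w.length = k + m
  swap
  · rw [sum_eq_zero fun τ _ => Gfun_eq_zero_of_length_ne hw]
    rcases lt_or_ge w.length k with h | h
    · rw [Gfun_eq_zero_of_length_ne (by rw [List.length_take]; omega), zero_mul]
    · rw [Gfun_eq_zero_of_length_ne (σ := σ'') (by rw [List.length_drop]; omega), mul_zero]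
  obtain ⟨τ₀, hτ₀⟩ := exists_permList_eq (n := k + m) (t := stdList (w.map Prod.fst))
    (by simpa [hw] using stdList_perm_range (w.map Prod.fst))
  have hG : ∀ τ, Gfun τ (Fin.append u' u'') w =
      if τ₀ = τ then Gfun τ₀ (Fin.append u' u'') w else 0 := by
    intro τ
    split_ifs with h
    · rw [h]
    · exact if_neg fun h' => h (permList_inj.1 (hτ₀.trans h'.1))
  have hcolors : w.map Prod.snd = colorList u' ++ colorList u'' ↔
      (w.take k).map Prod.snd = colorList u' ∧ (w.drop k).map Prod.snd = colorList u'' := by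
    rw [← List.take_append_drop k (w.map Prod.snd), List.map_take, List.map_drop]
    refine ⟨fun h => List.append_inj h ?_, fun ⟨h₁, h₂⟩ => by rw [h₁, h₂]⟩
    simp only [List.length_take, List.length_map, length_colorList]
    omega
  rw [sum_congr rfl fun τ _ => hG τ, sum_ite_eq]
  simp only [mem_filter, mem_univ, true_and, hτ₀, Gfun, List.map_take, List.map_drop,
    ← stdList_take, ← stdList_drop, colorList_append, hcolors]
  split_ifs <;> simp_all

end Product

section Coproduct
variable {ℓ : ℕ}

lemma stdList_of_mem_shuffleList {α β : Type} [LinearOrder α] [LinearOrder β] {v : List α}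
    {v' : List β} {s : List ((α ⊕ₗ β) × ℕ)}
    (hs : s ∈ shuffleList ((v.zip (stdList v)).map (Prod.map (toLex ∘ Sum.inl) id))
      ((v'.zip (stdList v')).map (Prod.map (toLex ∘ Sum.inr) (· + v.length)))) :
    stdList (s.map Prod.fst) = s.map Prod.snd := by
  refine stdList_eq_of_pairwise ?_ (pairwise_of_mem_shuffleList ?_ ?_ ?_ hs)
  · rw [(perm_of_mem_shuffleList hs).length_eq]
    refine ((perm_of_mem_shuffleList hs).map Prod.snd).trans ?_
    rw [List.map_append, List.map_map, List.map_map, Prod.map_snd', Prod.map_snd', ← List.map_map,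
      ← List.map_map (l := v'.zip _), List.map_snd_zip (by simp), List.map_snd_zip (by simp),
      List.map_id]
    simp only [List.length_append, List.length_map, List.length_zip, length_stdList, min_self,
      List.range_add]
    refine (stdList_perm_range v).append (((stdList_perm_range v').map _).trans ?_)
    simp [add_comm]
  · exact List.pairwise_map.2 <| (pairwise_zip_stdList v).imp fun h => by simpa using h
  · exact List.pairwise_map.2 <| (pairwise_zip_stdList v').imp fun h => by simpa using h
  · simp only [List.mem_map, Prod.exists]
    rintro _ ⟨a, i, hai, rfl⟩ _ ⟨b, j, -, rfl⟩
    have hi := lt_length_of_mem_stdList (List.of_mem_zip hai).2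
    simp only [Prod.map_apply, Function.comp_apply, id_eq]
    exact ⟨iff_of_true (Sum.Lex.inl_le_inr a b) (by omega),
      iff_of_false Sum.Lex.not_inr_le_inl (by omega)⟩

lemma zip_shiftW_coloredStd {X : Type} (g : ℕ × Fin ℓ → X) (c : ℕ) (w : List (ℕ × Fin ℓ)) :
    (w.map g).zip (shiftW c (coloredStd w)) =
      (w.zip (stdList (w.map Prod.fst))).map fun p => (g p.1, (p.2 + c, p.1.2)) :=
  List.ext_getElem (by simp [shiftW, coloredStd]) fun i _ _ => by simp [shiftW, coloredStd]

lemma coloredStd_of_mem_shuffleList {w' w'' : List (ℕ × Fin ℓ)}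
    {e : List (((ℕ ⊕ₗ ℕ) × Fin ℓ) × (ℕ × Fin ℓ))}
    (he : e ∈ shuffleList ((w'.map embL).zip (coloredStd w'))
      ((w''.map embR).zip (shiftW w'.length (coloredStd w'')))) :
    coloredStd (e.map Prod.fst) = e.map Prod.snd := by
  have hshift : coloredStd w' = shiftW 0 (coloredStd w') := by simp [shiftW]
  rw [hshift, zip_shiftW_coloredStd, zip_shiftW_coloredStd] at he
  have hletters : stdList ((e.map Prod.fst).map Prod.fst) = (e.map Prod.snd).map Prod.fst := by
    have hs := List.mem_map_of_mem (f := List.map fun x => (x.1.1, x.2.1)) he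
    rw [← shuffleList_map, List.map_map, List.map_map] at hs
    have h := stdList_of_mem_shuffleList (v := w'.map Prod.fst) (v' := w''.map Prod.fst)
      (s := e.map fun x => (x.1.1, x.2.1)) (by
        simpa [List.zip_map_left, Function.comp_def, Prod.map, embL, embR] using hs)
    simpa [List.map_map, Function.comp_def] using h
  have hcolors : (e.map Prod.fst).map Prod.snd = (e.map Prod.snd).map Prod.snd := by
    simp only [List.map_map]
    refine List.map_congr_left fun x hx => ?_
    rcases List.mem_append.1 ((perm_of_mem_shuffleList he).mem_iff.1 hx) with h | h <;>
    · obtain ⟨p, -, rfl⟩ := List.mem_map.1 h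
      rfl
  rw [coloredStd, hletters, hcolors]
  exact (List.zip_of_prod rfl rfl).symm

lemma map_coloredStd_shuffleList (w' w'' : List (ℕ × Fin ℓ)) :
    (shuffleList (w'.map embL) (w''.map embR)).map coloredStd =
      shuffleList (coloredStd w') (shiftW w'.length (coloredStd w'')) :=
  map_shuffleList_eq_of_zip (by simp) (by simp [shiftW]) fun _ => coloredStd_of_mem_shuffleList

lemma nodup_shuffleList_coloredStd (w' w'' : List (ℕ × Fin ℓ)) :
    (shuffleList (coloredStd w') (shiftW w'.length (coloredStd w''))).Nodup := by
  refine nodup_shuffleList fun x hx y hy hxy => ?_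
  have hx' : x.1 < w'.length := by
    simpa using lt_length_of_mem_stdList (List.of_mem_zip hx).1
  obtain ⟨z, -, rfl⟩ := List.mem_map.1 hy
  rw [hxy] at hx'
  exact absurd hx' (by simp)

lemma sum_shuffleList_Gfun {n : ℕ} (σ : Equiv.Perm (Fin n)) (u : Fin n → Fin ℓ)
    (w' w'' : List (ℕ × Fin ℓ)) :
    ((shuffleList (w'.map embL) (w''.map embR)).map (Gfun (α := ℕ ⊕ₗ ℕ) σ u)).sum =
      if cpWord σ u ∈ shuffleList (coloredStd w') (shiftW w'.length (coloredStd w''))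
      then 1 else 0 := by
  have hG : Gfun (α := ℕ ⊕ₗ ℕ) σ u = (fun y => if y = cpWord σ u then 1 else 0) ∘ coloredStd :=
    funext (Gfun_apply σ u)
  rw [hG, ← List.map_map, map_coloredStd_shuffleList,
    ← List.sum_toFinset _ (nodup_shuffleList_coloredStd w' w''), sum_ite_eq']
  exact if_congr List.mem_toFinset rfl rfl

lemma sum_shiftedShuffle_Gfun_mul_Gfun {n : ℕ} (x : List (ℕ × Fin ℓ)) (hx : x.length = n)
    (w' w'' : List (ℕ × Fin ℓ)) :
    ∑ k ∈ range (n + 1), ∑ σ' : Equiv.Perm (Fin k), ∑ σ'' : Equiv.Perm (Fin (n - k)),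
      ∑ u' : Fin k → Fin ℓ, ∑ u'' : Fin (n - k) → Fin ℓ,
        (if x ∈ shuffleList (cpWord σ' u') (shiftW k (cpWord σ'' u''))
          then Gfun (α := ℕ) σ' u' w' * Gfun (α := ℕ) σ'' u'' w'' else 0) =
      if x ∈ shuffleList (coloredStd w') (shiftW w'.length (coloredStd w'')) then 1 else 0 := by
  have hk : ∀ k, ∑ σ' : Equiv.Perm (Fin k), ∑ σ'' : Equiv.Perm (Fin (n - k)),
      ∑ u' : Fin k → Fin ℓ, ∑ u'' : Fin (n - k) → Fin ℓ,
        (if x ∈ shuffleList (cpWord σ' u') (shiftW k (cpWord σ'' u''))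
          then Gfun (α := ℕ) σ' u' w' * Gfun (α := ℕ) σ'' u'' w'' else 0) =
      if w'.length = k then (if w''.length = n - k then
        (if x ∈ shuffleList (coloredStd w') (shiftW k (coloredStd w'')) then 1 else 0) else 0)
      else 0 := fun k => by
    rw [← sum_Gfun_mul_cpWord w' fun y => if w''.length = n - k then
        (if x ∈ shuffleList y (shiftW k (coloredStd w'')) then 1 else 0) else 0]
    refine sum_congr rfl fun σ' _ => ?_
    rw [sum_comm]
    refine sum_congr rfl fun u' _ => ?_
    rw [← sum_Gfun_mul_cpWord w'' fun y =>
      if x ∈ shuffleList (cpWord σ' u') (shiftW k y) then 1 else 0, mul_sum]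
    refine sum_congr rfl fun σ'' _ => ?_
    rw [mul_sum]
    refine sum_congr rfl fun u'' _ => ?_
    split_ifs <;> ring
  simp only [hk, sum_ite_eq, mem_range]
  by_cases hmem : x ∈ shuffleList (coloredStd w') (shiftW w'.length (coloredStd w''))
  · have hlen := length_of_mem_shuffleList hmem
    simp only [length_coloredStd, shiftW, List.length_map] at hlen
    rw [if_pos (by omega), if_pos (by omega), if_pos hmem]
  · simp [hmem]

end Coproduct

/-- A coefficient of `f ⊗ g` at `(w', w'')` is read off `f(𝐀'⊕𝐀'')` as the sum of its
coefficients over all interleavings of `w'` (in `𝐀'`) and `w''` (in `𝐀''`). The second conjunct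
is the product rule of the `G`'s over the doubled alphabet, i.e. multiplicativity of `Δ`. -/
theorem stmt_1 (ℓ n : ℕ) (σ : Equiv.Perm (Fin n)) (u : Fin n → Fin ℓ) :
    (∀ w' w'' : List (ℕ × Fin ℓ),
      ((shuffleList (w'.map embL) (w''.map embR)).map
          (Gfun (α := ℕ ⊕ₗ ℕ) σ u)).sum =
        ∑ k ∈ Finset.range (n + 1),
          ∑ σ' : Equiv.Perm (Fin k), ∑ σ'' : Equiv.Perm (Fin (n - k)),
          ∑ u' : Fin k → Fin ℓ, ∑ u'' : Fin (n - k) → Fin ℓ,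
            (if cpWord σ u ∈ shuffleList (cpWord σ' u') (shiftW k (cpWord σ'' u''))
             then Gfun (α := ℕ) σ' u' w' * Gfun (α := ℕ) σ'' u'' w'' else 0))
    ∧ (∀ (k m : ℕ) (σ' : Equiv.Perm (Fin k)) (u' : Fin k → Fin ℓ)
        (σ'' : Equiv.Perm (Fin m)) (u'' : Fin m → Fin ℓ),
        ncMul (Gfun (α := ℕ ⊕ₗ ℕ) σ' u') (Gfun σ'' u'') =
          ∑ τ ∈ Finset.univ.filter (fun τ : Equiv.Perm (Fin (k + m)) =>
              stdList ((permList τ).take k) = permList σ' ∧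
              stdList ((permList τ).drop k) = permList σ''),
            Gfun τ (Fin.append u' u'')) :=
  ⟨fun w' w'' => by
    rw [sum_shuffleList_Gfun, sum_shiftedShuffle_Gfun_mul_Gfun _ (length_cpWord σ u)],
   fun _ _ => ncMul_Gfun_Gfun⟩
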